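/- Let R ∈ ℂⁿˣⁿ be Hermitian, let v ∈ ℂⁿ be unit-modulus, and assume all entries of Rv are nonzero. Then the fixed point iteration update v⁺ = unt(Rv) does not decrease the objective value: ‖R · unt(Rv)‖₁ ≥ ‖Rv‖₁. -/

import Mathlib

open Matrix

/-!
Write `a = R v` and `u = unt a`. Since `R` is Hermitian, `vᴴ (R u) = (R v)ᴴ u = ∑ |aᵢ|`, while
`Re (vᴴ w) ≤ ‖w‖₁` for every `w` because `v` is unit-modulus. Taking `w = R u` gives
`‖R u‖₁ ≥ ‖a‖₁`.
-/

variable {𝕜 ι : Type*} [RCLike 𝕜] [Fintype ι]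

/-- Entrywise normalization `aᵢ / |aᵢ|`; an entry with `aᵢ = 0` is sent to `0`. -/
noncomputable def unt (a : ι → 𝕜) : ι → 𝕜 := fun i => a i / (‖a i‖ : 𝕜)

lemma star_dotProduct_unt (a : ι → 𝕜) : star a ⬝ᵥ unt a = ∑ i, (‖a i‖ : 𝕜) := by
  refine Finset.sum_congr rfl fun i _ => ?_
  rcases eq_or_ne (a i) 0 with h | h
  · simp [unt, h]
  · have h' : (‖a i‖ : 𝕜) ≠ 0 := by simpa using h
    rw [unt, Pi.star_apply, RCLike.star_def, mul_div_assoc', RCLike.conj_mul, div_eq_iff h']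
    ring

lemma re_star_dotProduct_le_sum_norm {v : ι → 𝕜} (hv : ∀ i, ‖v i‖ ≤ 1) (w : ι → 𝕜) :
    RCLike.re (star v ⬝ᵥ w) ≤ ∑ i, ‖w i‖ := by
  rw [dotProduct, map_sum]
  refine Finset.sum_le_sum fun i _ => ?_
  calc RCLike.re (star v i * w i) ≤ ‖star v i * w i‖ := RCLike.re_le_norm _
    _ ≤ ‖w i‖ := by
      rw [norm_mul, Pi.star_apply, norm_star]
      exact mul_le_of_le_one_left (norm_nonneg _) (hv i)

lemma Matrix.IsHermitian.star_dotProduct_mulVec {R : Matrix ι ι 𝕜} (hR : R.IsHermitian)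
    (v w : ι → 𝕜) : star v ⬝ᵥ R *ᵥ w = star (R *ᵥ v) ⬝ᵥ w := by
  rw [dotProduct_mulVec, star_mulVec, hR.eq]

theorem stmt_6_general {n : ℕ} (R : Matrix (Fin n) (Fin n) ℂ) (hR : R.IsHermitian)
    (v : Fin n → ℂ) (hv : ∀ i, ‖v i‖ = 1) :
    (∑ i, ‖(R *ᵥ fun j => (R *ᵥ v) j / (‖(R *ᵥ v) j‖ : ℂ)) i‖)
      ≥ ∑ i, ‖(R *ᵥ v) i‖ := by
  calc ∑ i, ‖(R *ᵥ v) i‖ = RCLike.re (star (R *ᵥ v) ⬝ᵥ unt (R *ᵥ v)) := by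
        rw [star_dotProduct_unt, map_sum]
        simp
    _ = RCLike.re (star v ⬝ᵥ R *ᵥ unt (R *ᵥ v)) := by rw [hR.star_dotProduct_mulVec]
    _ ≤ ∑ i, ‖(R *ᵥ unt (R *ᵥ v)) i‖ := re_star_dotProduct_le_sum_norm (fun i => (hv i).le) _

/-- Monotonicity of the fixed point iteration: if `R` is Hermitian, `v` is
unit-modulus, and all entries of `Rv` are nonzero, then
`‖R · unt(Rv)‖₁ ≥ ‖Rv‖₁`. -/
theorem stmt_6 {n : ℕ} (R : Matrix (Fin n) (Fin n) ℂ) (hR : R.IsHermitian)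
    (v : Fin n → ℂ) (hv : ∀ i, ‖v i‖ = 1)
    (hnz : ∀ i, (R *ᵥ v) i ≠ 0) :
    (∑ i, ‖(R *ᵥ fun j => (R *ᵥ v) j / (‖(R *ᵥ v) j‖ : ℂ)) i‖)
      ≥ ∑ i, ‖(R *ᵥ v) i‖ :=
  stmt_6_general R hR v hv
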